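/- arXiv:2005.06398 — 5 statements merged into one kernel-verified Lean document; each statement's English description precedes it below -/
import Mathlib

section
/- Let N be a quasi-norm on 2×2 real matrices. For every ε > 0 there exists a constant C > 0 (depending on N and ε) such that every ε-minimizer of N over the solution set S is confined to a bounded interval in its unobserved entry: if W ∈ S satisfies N(W) ≤ inf_{W' ∈ S} N(W') + ε, then |W₁₁| ≤ C. -/
/-- The solution set `S` of the matrix completion problem with observations
`b₁₂ = b₂₁ = 1`, `b₂₂ = 0` (the `(1,1)` entry, here indexed `(0,0)`, is unobserved). -/
def solSet : Set (Matrix (Fin 2) (Fin 2) ℝ) :=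
  {W | W 0 1 = 1 ∧ W 1 0 = 1 ∧ W 1 1 = 0}

/-- **ε-minimizers of any quasi-norm over `S` have bounded unobserved entry.**
Let `N` be a quasi-norm on 2×2 real matrices (nonnegative, vanishing exactly at `0`,
absolutely homogeneous, satisfying the weakened triangle inequality with constant `c ≥ 1`).
For every `ε > 0` there is `C > 0` such that any `W ∈ S` with
`N W ≤ inf_{W' ∈ S} N W' + ε` satisfies `|W₁₁| ≤ C`. -/
theorem quasiNorm_eps_minimizers_bounded
    (N : Matrix (Fin 2) (Fin 2) ℝ → ℝ) (c : ℝ) (hc : 1 ≤ c)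
    (hN_nonneg : ∀ A, 0 ≤ N A)
    (hN_zero : ∀ A, N A = 0 ↔ A = 0)
    (hN_hom : ∀ (α : ℝ) (A), N (α • A) = |α| * N A)
    (hN_tri : ∀ A B, N (A + B) ≤ c * (N A + N B))
    (ε : ℝ) (hε : 0 < ε) :
    ∃ C : ℝ, 0 < C ∧
      ∀ W ∈ solSet, N W ≤ sInf (N '' solSet) + ε → |W 0 0| ≤ C := by
  set W₀ : Matrix (Fin 2) (Fin 2) ℝ := !![0, 1; 1, 0] with hW₀
  set E : Matrix (Fin 2) (Fin 2) ℝ := !![1, 0; 0, 0] with hE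
  have hW₀S : W₀ ∈ solSet := by
    refine ⟨?_, ?_, ?_⟩ <;> simp [hW₀]
  have hENe : E ≠ 0 := by
    intro h
    have := congrFun (congrFun h 0) 0
    simp [hE] at this
  have hNE : 0 < N E := lt_of_le_of_ne (hN_nonneg E) fun h => hENe ((hN_zero E).mp h.symm)
  have hc0 : (0:ℝ) < c := lt_of_lt_of_le zero_lt_one hc
  have hCpos : 0 < c * (N W₀ + (N W₀ + ε)) / N E := by
    apply div_pos _ hNE
    have := hN_nonneg W₀
    nlinarith
  refine ⟨c * (N W₀ + (N W₀ + ε)) / N E, hCpos, ?_⟩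
  intro W hW hWmin
  have hdecomp : (W 0 0) • E = W + (-1 : ℝ) • W₀ := by
    obtain ⟨h1, h2, h3⟩ := hW
    ext i j
    fin_cases i <;> fin_cases j <;>
      simp [hE, hW₀, h1, h2, h3, Matrix.smul_apply]
  have hInf : sInf (N '' solSet) ≤ N W₀ := by
    apply csInf_le
    · exact ⟨0, fun x ⟨A, _, hA⟩ => hA ▸ hN_nonneg A⟩
    · exact ⟨W₀, hW₀S, rfl⟩
  have key : |W 0 0| * N E ≤ c * (N W₀ + (N W₀ + ε)) := by
    calc |W 0 0| * N E = N ((W 0 0) • E) := (hN_hom _ _).symm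
      _ = N (W + (-1 : ℝ) • W₀) := by rw [hdecomp]
      _ ≤ c * (N W + N ((-1 : ℝ) • W₀)) := hN_tri _ _
      _ = c * (N W + N W₀) := by rw [hN_hom]; norm_num
      _ ≤ c * (N W₀ + (N W₀ + ε)) := by
          have hc0 : 0 ≤ c := le_trans zero_le_one hc
          have : N W ≤ N W₀ + ε := le_trans hWmin (by linarith)
          nlinarith [hN_nonneg W₀]
  rw [le_div_iff₀ hNE]
  exact key
end

section
/- For every p ∈ (0, ∞), the function x ↦ s₁(x)^p + s₂(x)^p is even and strictly increasing on [0, ∞); moreover s₁ itself is even and strictly increasing on [0, ∞) with s₁(0) = 1. Consequently, the Schatten-p quasi-norm of W_x over the solution set S — equal to (s₁(x)^p + s₂(x)^p)^{1/p} for 0 < p < ∞ and to s₁(x) for p = ∞ — attains its minimum over x ∈ ℝ if and only if x = 0. -/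
/-- The first (largest) singular value of `W_x = [[x,1],[1,0]]`. -/
noncomputable def s1 (x : ℝ) : ℝ := (Real.sqrt (x ^ 2 + 4) + |x|) / 2

/-- The second (smallest) singular value of `W_x = [[x,1],[1,0]]`. -/
noncomputable def s2 (x : ℝ) : ℝ := (Real.sqrt (x ^ 2 + 4) - |x|) / 2

/-!
Since `|det W_x| = 1`, `s₁ s₂ = 1`, so `s₁^p + s₂^p = u + u⁻¹` with `u = s₁^p ≥ 1`. As `u ↦ u + u⁻¹`
increases on `[1, ∞)` and `s₁` increases on `[0, ∞)`, both `s₁^p + s₂^p` and `s₁` are even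
functions strictly increasing on `[0, ∞)`, and such a function is minimised exactly at `0`.
-/

open Set

lemma add_inv_strictMonoOn : StrictMonoOn (fun u : ℝ => u + u⁻¹) (Ici 1) := by
  intro a ha b hb hab
  have ha0 : 0 < a := zero_lt_one.trans_le ha
  have hab1 : 1 < a * b := by nlinarith [mem_Ici.mp ha]
  have hinv : a⁻¹ - b⁻¹ = (b - a) / (a * b) := by
    field_simp [(ha0.trans hab).ne']
  have : (b - a) / (a * b) < b - a := div_lt_self (sub_pos.mpr hab) hab1
  show a + a⁻¹ < b + b⁻¹
  linarith

lemma rpow_add_inv_rpow_strictMonoOn {p : ℝ} (hp : 0 < p) :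
    StrictMonoOn (fun t : ℝ => t ^ p + t⁻¹ ^ p) (Ici 1) := by
  have hmaps : MapsTo (fun t : ℝ => t ^ p) (Ici 1) (Ici 1) := fun t ht => Real.one_le_rpow ht hp.le
  refine (add_inv_strictMonoOn.comp ((Real.strictMonoOn_rpow_Ici_of_exponent_pos hp).mono
    (Ici_subset_Ici.mpr zero_le_one)) hmaps).congr fun t ht => ?_
  simp [Real.inv_rpow (zero_le_one.trans ht)]

section EvenFunction

variable {α β : Type*} [AddCommGroup α] [LinearOrder α] {f : α → β}

lemma Function.Even.apply_abs (hf : f.Even) (x : α) : f |x| = f x := by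
  rcases abs_choice x with h | h <;> rw [h]
  exact hf x

lemma Function.Even.forall_le_iff_eq_zero [IsOrderedAddMonoid α] [Preorder β] (hf : f.Even)
    (hmono : StrictMonoOn f (Ici 0)) (x : α) : (∀ y, f x ≤ f y) ↔ x = 0 := by
  constructor
  · intro hmin
    by_contra hx
    have hlt : f 0 < f x := hf.apply_abs x ▸
      hmono self_mem_Ici (abs_nonneg x) (abs_pos.mpr hx)
    exact hlt.not_ge (hmin 0)
  · rintro rfl y
    rw [← hf.apply_abs y]
    exact hmono.monotoneOn self_mem_Ici (abs_nonneg y) (abs_nonneg y)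

end EvenFunction

lemma s1_neg (x : ℝ) : s1 (-x) = s1 x := by simp [s1]

lemma s2_neg (x : ℝ) : s2 (-x) = s2 x := by simp [s2]

lemma s1_zero : s1 0 = 1 := by
  rw [s1, show (0 : ℝ) ^ 2 + 4 = 2 ^ 2 by norm_num, Real.sqrt_sq zero_le_two]
  norm_num

lemma one_le_s1 (x : ℝ) : 1 ≤ s1 x := by
  have : 2 ≤ √(x ^ 2 + 4) := Real.le_sqrt_of_sq_le (by nlinarith [sq_nonneg x])
  unfold s1
  linarith [abs_nonneg x]

lemma s1_mul_s2 (x : ℝ) : s1 x * s2 x = 1 := by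
  have hsq := Real.sq_sqrt (show 0 ≤ x ^ 2 + 4 by positivity)
  have := sq_abs x
  unfold s1 s2
  nlinarith

lemma s2_eq_inv_s1 (x : ℝ) : s2 x = (s1 x)⁻¹ := eq_inv_of_mul_eq_one_right (s1_mul_s2 x)

lemma s1_strictMonoOn : StrictMonoOn s1 (Ici 0) := by
  intro a ha b hb hab
  rw [mem_Ici] at ha hb
  unfold s1
  rw [abs_of_nonneg ha, abs_of_nonneg hb]
  gcongr

/-- **Schatten-p (quasi-)norms over the solution set are minimized exactly at `x = 0`.**
For every `p ∈ (0,∞)` the map `x ↦ s₁(x)^p + s₂(x)^p` is even and strictly increasing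
on `[0,∞)`; moreover `s₁` itself is even, strictly increasing on `[0,∞)`, with `s₁(0) = 1`.
Consequently the Schatten-p quasi-norm of `W_x`, equal to `(s₁(x)^p + s₂(x)^p)^(1/p)`
for `0 < p < ∞` and to `s₁(x)` for `p = ∞`, attains its minimum over `x ∈ ℝ`
if and only if `x = 0`. -/
theorem schatten_p_minimized_iff_zero (p : ℝ) (hp : 0 < p) :
    (∀ x : ℝ, s1 (-x) ^ p + s2 (-x) ^ p = s1 x ^ p + s2 x ^ p) ∧
    StrictMonoOn (fun x : ℝ => s1 x ^ p + s2 x ^ p) (Set.Ici 0) ∧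
    (∀ x : ℝ, s1 (-x) = s1 x) ∧
    StrictMonoOn s1 (Set.Ici 0) ∧
    s1 0 = 1 ∧
    (∀ x : ℝ,
      (∀ y : ℝ, (s1 x ^ p + s2 x ^ p) ^ (1 / p) ≤ (s1 y ^ p + s2 y ^ p) ^ (1 / p)) ↔
        x = 0) ∧
    (∀ x : ℝ, (∀ y : ℝ, s1 x ≤ s1 y) ↔ x = 0) := by
  set f : ℝ → ℝ := fun x => s1 x ^ p + s2 x ^ p
  have hf_even : f.Even := fun x => by simp only [f, s1_neg, s2_neg]
  have hf_mono : StrictMonoOn f (Ici 0) := by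
    simp only [f, s2_eq_inv_s1]
    exact (rpow_add_inv_rpow_strictMonoOn hp).comp s1_strictMonoOn fun x _ => one_le_s1 x
  have hnorm_mono : StrictMonoOn (fun x => f x ^ (1 / p)) (Ici 0) :=
    (Real.strictMonoOn_rpow_Ici_of_exponent_pos (one_div_pos.mpr hp)).comp hf_mono
      fun x _ => by
        have hs1 : 0 ≤ s1 x := zero_le_one.trans (one_le_s1 x)
        simp only [f, mem_Ici, s2_eq_inv_s1]
        positivity
  exact ⟨hf_even, hf_mono, s1_neg, s1_strictMonoOn, s1_zero,
    (hf_even.left_comp (· ^ (1 / p))).forall_le_iff_eq_zero hnorm_mono,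
    Function.Even.forall_le_iff_eq_zero s1_neg s1_strictMonoOn⟩
end

section
/- The effective rank along the solution set S satisfies: for every x ∈ ℝ, 1 < erank(W_x) ≤ 2; erank(W_x) = 2 if and only if x = 0; erank(W_x) = erank(W_{−x}); for all 0 ≤ x < y one has erank(W_y) < erank(W_x) (strict monotone decrease in |x|); and erank(W_x) → 1 as |x| → ∞. -/
open Matrix Filter

/-- The matrix `W_x = [[x,1],[1,0]]`. -/
noncomputable def Wmat (x : ℝ) : Matrix (Fin 2) (Fin 2) ℝ := !![x, 1; 1, 0]

/-- Largest singular value of a 2×2 real matrix, via the variational characterization. -/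
noncomputable def sigma1 (A : Matrix (Fin 2) (Fin 2) ℝ) : ℝ :=
  sSup {r : ℝ | ∃ v : EuclideanSpace ℝ (Fin 2), ‖v‖ = 1 ∧ r = ‖Matrix.toEuclideanLin A v‖}

/-- Smallest singular value of a 2×2 real matrix, via the variational characterization. -/
noncomputable def sigma2 (A : Matrix (Fin 2) (Fin 2) ℝ) : ℝ :=
  sInf {r : ℝ | ∃ v : EuclideanSpace ℝ (Fin 2), ‖v‖ = 1 ∧ r = ‖Matrix.toEuclideanLin A v‖}

/-- Shannon entropy of the distribution `(p, q)`, with the convention `0·ln 0 = 0`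
(automatic since `Real.log 0 = 0`). -/
noncomputable def entH (p q : ℝ) : ℝ := -(p * Real.log p) - q * Real.log q

/-- Effective rank `erank(W) = exp H(ρ₁, ρ₂)` where `ρᵢ = σᵢ/(σ₁+σ₂)`. -/
noncomputable def erank (A : Matrix (Fin 2) (Fin 2) ℝ) : ℝ :=
  Real.exp (entH (sigma1 A / (sigma1 A + sigma2 A)) (sigma2 A / (sigma1 A + sigma2 A)))

/-!
`W_x` is symmetric with eigenvalues `(x ± √(x² + 4)) / 2`, so its singular values are
`(√(x² + 4) ± |x|) / 2`: for any `2 × 2` matrix `A` and unit vector `v`, `‖A v‖²` lies between the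
roots of `t² - ‖A‖_F² t + (det A)²`, and for `W_x` the eigenvectors attain both roots. Hence
`ρ₁(W_x) = (1 + |x| / √(x² + 4)) / 2` increases strictly from `1/2` towards `1` as `|x|` grows, and
`erank(W_x) = exp (binEntropy ρ₁(W_x))` inherits the claimed behaviour from the binary entropy,
which is maximal only at `1/2`, strictly decreasing on `[1/2, 1]` and zero at `1`.
-/

open Real Topology

lemma norm_sq_fin_two (v : EuclideanSpace ℝ (Fin 2)) : ‖v‖ ^ 2 = v 0 ^ 2 + v 1 ^ 2 := by
  simp [EuclideanSpace.real_norm_sq_eq, Fin.sum_univ_two]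

lemma norm_toEuclideanLin_sq_fin_two (A : Matrix (Fin 2) (Fin 2) ℝ)
    (v : EuclideanSpace ℝ (Fin 2)) :
    ‖toEuclideanLin A v‖ ^ 2 =
      (A 0 0 * v 0 + A 0 1 * v 1) ^ 2 + (A 1 0 * v 0 + A 1 1 * v 1) ^ 2 := by
  simp [EuclideanSpace.real_norm_sq_eq, Fin.sum_univ_two, toLpLin_apply]

lemma norm_toEuclideanLin_sq_quadratic_nonpos (A : Matrix (Fin 2) (Fin 2) ℝ)
    {v : EuclideanSpace ℝ (Fin 2)} (hv : ‖v‖ = 1) :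
    ‖toEuclideanLin A v‖ ^ 4 - (∑ i, ∑ j, A i j ^ 2) * ‖toEuclideanLin A v‖ ^ 2 + A.det ^ 2
      ≤ 0 := by
  have hunit := norm_sq_fin_two v
  rw [hv, one_pow] at hunit
  rw [show ‖toEuclideanLin A v‖ ^ 4 = (‖toEuclideanLin A v‖ ^ 2) ^ 2 by ring,
    norm_toEuclideanLin_sq_fin_two, det_fin_two]
  simp only [Fin.sum_univ_two]
  set a := A 0 0; set b := A 0 1; set c := A 1 0; set d := A 1 1
  set p := v 0; set q := v 1
  set N := (a * p + b * q) ^ 2 + (c * p + d * q) ^ 2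
  -- Cayley–Hamilton for `AᵀA` and Lagrange's identity for `v` and `AᵀA v`
  have key : N ^ 2 - (a ^ 2 + b ^ 2 + (c ^ 2 + d ^ 2)) * N * (p ^ 2 + q ^ 2)
      + (a * d - b * c) ^ 2 * (p ^ 2 + q ^ 2) ^ 2
      = -(p * ((a*b+c*d) * p + (b^2+d^2) * q) - q * ((a^2+c^2) * p + (a*b+c*d) * q)) ^ 2 := by
    ring
  rw [← hunit, one_pow, mul_one, mul_one] at key
  rw [key]
  exact neg_nonpos.2 (sq_nonneg _)

lemma toEuclideanLin_Wmat_eigen {x μ : ℝ} (hμ : μ ^ 2 = x * μ + 1) :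
    toEuclideanLin (Wmat x) !₂[μ, 1] = μ • !₂[μ, 1] := by
  ext i; fin_cases i <;> simp [Wmat, toLpLin_apply]; linarith

lemma exists_unit_norm_toEuclideanLin_eq_abs {n : Type*} [Fintype n] [DecidableEq n]
    (A : Matrix n n ℝ) {u : EuclideanSpace ℝ n} (hu : u ≠ 0) {μ : ℝ}
    (h : toEuclideanLin A u = μ • u) :
    ∃ v : EuclideanSpace ℝ n, ‖v‖ = 1 ∧ ‖toEuclideanLin A v‖ = |μ| := by
  have hunit : ‖‖u‖⁻¹ • u‖ = 1 := by
    rw [norm_smul, norm_inv, norm_norm, inv_mul_cancel₀ (norm_ne_zero_iff.2 hu)]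
  refine ⟨‖u‖⁻¹ • u, hunit, ?_⟩
  rw [map_smul, h, smul_comm, norm_smul, hunit, Real.norm_eq_abs, mul_one]

lemma exists_unit_norm_toEuclideanLin_Wmat_eq (x : ℝ) {ε : ℝ} (hε : ε ^ 2 = 1) :
    ∃ v : EuclideanSpace ℝ (Fin 2), ‖v‖ = 1 ∧
      ‖toEuclideanLin (Wmat x) v‖ = (√(x ^ 2 + 4) + ε * x) / 2 := by
  have hs : √(x ^ 2 + 4) ^ 2 = x ^ 2 + 4 := sq_sqrt (by positivity)
  have hε1 : |ε| = 1 := by rw [← sqrt_sq_eq_abs, hε, sqrt_one]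
  have hεx : |ε * x| < √(x ^ 2 + 4) := by
    rw [abs_mul, hε1, one_mul, ← sqrt_sq_eq_abs]
    exact sqrt_lt_sqrt (sq_nonneg x) (by linarith)
  set μ := (x + ε * √(x ^ 2 + 4)) / 2
  have hμ : μ ^ 2 = x * μ + 1 := by linear_combination (ε ^ 2 * hs + (x ^ 2 + 4) * hε) / 4
  have hne : (!₂[μ, 1] : EuclideanSpace ℝ (Fin 2)) ≠ 0 := fun h => by
    simpa using congrFun (congrArg WithLp.ofLp h) 1
  obtain ⟨v, hv, hvμ⟩ :=
    exists_unit_norm_toEuclideanLin_eq_abs _ hne (toEuclideanLin_Wmat_eigen hμ)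
  have hεμ : ε * μ = (√(x ^ 2 + 4) + ε * x) / 2 := by
    linear_combination (√(x ^ 2 + 4) / 2) * hε
  refine ⟨v, hv, ?_⟩
  rw [hvμ, ← one_mul |μ|, ← hε1, ← abs_mul, hεμ, abs_of_nonneg]
  linarith [neg_abs_le (ε * x)]

lemma norm_toEuclideanLin_Wmat_mem_Icc (x : ℝ) {v : EuclideanSpace ℝ (Fin 2)} (hv : ‖v‖ = 1) :
    ‖toEuclideanLin (Wmat x) v‖ ∈
      Set.Icc ((√(x ^ 2 + 4) - |x|) / 2) ((√(x ^ 2 + 4) + |x|) / 2) := by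
  have hF : ∑ i, ∑ j, Wmat x i j ^ 2 = x ^ 2 + 2 := by simp [Wmat, Fin.sum_univ_two]; ring
  have hD : (Wmat x).det = -1 := by simp [Wmat, det_fin_two]
  have hq := norm_toEuclideanLin_sq_quadratic_nonpos (Wmat x) hv
  rw [hF, hD] at hq
  set N := ‖toEuclideanLin (Wmat x) v‖
  set a := (√(x ^ 2 + 4) + |x|) / 2
  set b := (√(x ^ 2 + 4) - |x|) / 2
  have hs : √(x ^ 2 + 4) ^ 2 = x ^ 2 + 4 := sq_sqrt (by positivity)
  have hxs : |x| ≤ √(x ^ 2 + 4) := by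
    rw [← sqrt_sq_eq_abs]; exact sqrt_le_sqrt (by linarith)
  have hb : 0 ≤ b := by simp only [b]; linarith
  have hba : b ≤ a := by simp only [a, b]; linarith [abs_nonneg x]
  have hba2 : b ^ 2 ≤ a ^ 2 := pow_le_pow_left₀ hb hba 2
  have hprod : (N ^ 2 - a ^ 2) * (N ^ 2 - b ^ 2) ≤ 0 := by
    have hab : a * b = 1 := by simp only [a, b]; nlinarith [sq_abs x]
    have hab2 : a ^ 2 + b ^ 2 = x ^ 2 + 2 := by simp only [a, b]; nlinarith [sq_abs x]
    nlinarith
  have hN : 0 ≤ N := norm_nonneg _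
  constructor
  · refine (pow_le_pow_iff_left₀ hb hN two_ne_zero).1 (not_lt.1 fun h => ?_)
    nlinarith [mul_pos_of_neg_of_neg (sub_neg.2 (h.trans_le hba2)) (sub_neg.2 h)]
  · refine (pow_le_pow_iff_left₀ hN (hb.trans hba) two_ne_zero).1 (not_lt.1 fun h => ?_)
    nlinarith [mul_pos (sub_pos.2 h) (sub_pos.2 (hba2.trans_lt h))]

lemma sigma1_eq_of_isGreatest {A : Matrix (Fin 2) (Fin 2) ℝ} {r : ℝ}
    (hle : ∀ v : EuclideanSpace ℝ (Fin 2), ‖v‖ = 1 → ‖toEuclideanLin A v‖ ≤ r)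
    (hr : ∃ v : EuclideanSpace ℝ (Fin 2), ‖v‖ = 1 ∧ ‖toEuclideanLin A v‖ = r) :
    sigma1 A = r := by
  obtain ⟨v, hv, rfl⟩ := hr
  exact IsGreatest.csSup_eq ⟨⟨v, hv, rfl⟩, by rintro _ ⟨w, hw, rfl⟩; exact hle w hw⟩

lemma sigma2_eq_of_isLeast {A : Matrix (Fin 2) (Fin 2) ℝ} {r : ℝ}
    (hle : ∀ v : EuclideanSpace ℝ (Fin 2), ‖v‖ = 1 → r ≤ ‖toEuclideanLin A v‖)
    (hr : ∃ v : EuclideanSpace ℝ (Fin 2), ‖v‖ = 1 ∧ ‖toEuclideanLin A v‖ = r) :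
    sigma2 A = r := by
  obtain ⟨v, hv, rfl⟩ := hr
  exact IsLeast.csInf_eq ⟨⟨v, hv, rfl⟩, by rintro _ ⟨w, hw, rfl⟩; exact hle w hw⟩

lemma exists_sign_mul_eq_abs (x : ℝ) : ∃ ε : ℝ, ε ^ 2 = 1 ∧ ε * x = |x| := by
  rcases abs_choice x with h | h
  · exact ⟨1, by norm_num, by rw [h, one_mul]⟩
  · exact ⟨-1, by norm_num, by rw [h, neg_one_mul]⟩

lemma sigma1_Wmat (x : ℝ) : sigma1 (Wmat x) = (√(x ^ 2 + 4) + |x|) / 2 := by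
  obtain ⟨ε, hε, hεx⟩ := exists_sign_mul_eq_abs x
  refine sigma1_eq_of_isGreatest (fun v hv => (norm_toEuclideanLin_Wmat_mem_Icc x hv).2) ?_
  simpa [hεx] using exists_unit_norm_toEuclideanLin_Wmat_eq x hε

lemma sigma2_Wmat (x : ℝ) : sigma2 (Wmat x) = (√(x ^ 2 + 4) - |x|) / 2 := by
  obtain ⟨ε, hε, hεx⟩ := exists_sign_mul_eq_abs x
  refine sigma2_eq_of_isLeast (fun v hv => (norm_toEuclideanLin_Wmat_mem_Icc x hv).1) ?_
  simpa [← hεx, sub_eq_add_neg] using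
    exists_unit_norm_toEuclideanLin_Wmat_eq x (ε := -ε) (by rw [neg_sq, hε])

lemma entH_one_sub (p : ℝ) : entH p (1 - p) = binEntropy p := by
  simp [entH, binEntropy, log_inv]; ring

lemma erank_eq_exp_binEntropy {A : Matrix (Fin 2) (Fin 2) ℝ} (hA : sigma1 A + sigma2 A ≠ 0) :
    erank A = exp (binEntropy (sigma1 A / (sigma1 A + sigma2 A))) := by
  rw [erank, ← entH_one_sub, one_sub_div hA, add_sub_cancel_left]

lemma div_sqrt_sq_add_lt_one {c : ℝ} (hc : 0 < c) (t : ℝ) : t / √(t ^ 2 + c) < 1 := by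
  rw [div_lt_one (by positivity)]
  calc t ≤ |t| := le_abs_self t
    _ = √(t ^ 2) := (sqrt_sq_eq_abs t).symm
    _ < √(t ^ 2 + c) := sqrt_lt_sqrt (sq_nonneg t) (by linarith)

lemma strictMono_div_sqrt_sq_add {c : ℝ} (hc : 0 < c) :
    StrictMono fun t : ℝ => t / √(t ^ 2 + c) := by
  intro x y hxy
  set X := √(x ^ 2 + c)
  set Y := √(y ^ 2 + c)
  have hX : X ^ 2 = x ^ 2 + c := sq_sqrt (by positivity)
  have hY : Y ^ 2 = y ^ 2 + c := sq_sqrt (by positivity)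
  have hX0 : 0 < X := by positivity
  have hY0 : 0 < Y := by positivity
  have hxyXY : x * y < X * Y :=
    (le_abs_self _).trans_lt (abs_lt_of_sq_lt_sq (by nlinarith) (by positivity))
  have key : (y * X - x * Y) * (X + Y) = (y - x) * (X * Y - x * y + c) := by
    linear_combination y * hX - x * hY
  have hpos : 0 < (y * X - x * Y) * (X + Y) := by
    rw [key]; exact mul_pos (by linarith) (by linarith)
  show x / X < y / Y
  rw [div_lt_div_iff₀ hX0 hY0]
  linarith [pos_of_mul_pos_left hpos (by positivity : (0 : ℝ) ≤ X + Y)]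

lemma tendsto_div_sqrt_sq_add_atTop (c : ℝ) :
    Tendsto (fun t : ℝ => t / √(t ^ 2 + c)) atTop (𝓝 1) := by
  have hlim : Tendsto (fun t : ℝ => (√(1 + c / t ^ 2))⁻¹) atTop (𝓝 1) := by
    have h0 : Tendsto (fun t : ℝ => c / t ^ 2) atTop (𝓝 0) :=
      tendsto_const_nhds.div_atTop (tendsto_pow_atTop two_ne_zero)
    have hcont : ContinuousAt (fun u : ℝ => (√(1 + u))⁻¹) 0 := by fun_prop (disch := simp)
    simpa only [Function.comp_def, add_zero, sqrt_one, inv_one] using hcont.tendsto.comp h0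
  refine hlim.congr' ?_
  filter_upwards [eventually_gt_atTop 0] with t ht
  rw [one_add_div (by positivity), sqrt_div' _ (by positivity), sqrt_sq ht.le, inv_div,
    add_comm (t ^ 2)]

noncomputable def erankProfile (t : ℝ) : ℝ := exp (binEntropy ((1 + t / √(t ^ 2 + 4)) / 2))

lemma one_lt_erankProfile {t : ℝ} (ht : 0 ≤ t) : 1 < erankProfile t := by
  have hlt := div_sqrt_sq_add_lt_one four_pos t
  have hnn : 0 ≤ t / √(t ^ 2 + 4) := by positivity
  exact one_lt_exp_iff.2 (binEntropy_pos (by linarith) (by linarith))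

lemma erankProfile_le_two (t : ℝ) : erankProfile t ≤ 2 := by
  calc erankProfile t ≤ exp (log 2) := exp_le_exp.2 binEntropy_le_log_two
    _ = 2 := exp_log two_pos

lemma erankProfile_eq_two_iff {t : ℝ} : erankProfile t = 2 ↔ t = 0 := by
  have hs : √(t ^ 2 + 4) ≠ 0 := by positivity
  rw [erankProfile, exp_injective.eq_iff' (exp_log two_pos), binEntropy_eq_log_two]
  constructor
  · intro h
    simpa [hs] using (by linarith : t / √(t ^ 2 + 4) = 0)
  · rintro rfl; norm_num

lemma strictAntiOn_erankProfile : StrictAntiOn erankProfile (Set.Ici 0) := by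
  intro x hx y hy hxy
  have hmem : ∀ t : ℝ, 0 ≤ t → (1 + t / √(t ^ 2 + 4)) / 2 ∈ Set.Icc 2⁻¹ 1 := fun t ht =>
    ⟨by linarith [show 0 ≤ t / √(t ^ 2 + 4) by positivity],
      by linarith [div_sqrt_sq_add_lt_one four_pos t]⟩
  refine exp_lt_exp.2 (binEntropy_strictAntiOn (hmem x hx) (hmem y hy) ?_)
  linarith [strictMono_div_sqrt_sq_add four_pos hxy]

lemma tendsto_erankProfile_atTop : Tendsto erankProfile atTop (𝓝 1) := by
  have hw : Tendsto (fun t : ℝ => (1 + t / √(t ^ 2 + 4)) / 2) atTop (𝓝 1) := by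
    simpa using ((tendsto_div_sqrt_sq_add_atTop 4).const_add 1).div_const 2
  have hcont : ContinuousAt (fun p => exp (binEntropy p)) 1 := by fun_prop
  have h := hcont.tendsto.comp hw
  rw [binEntropy_one, exp_zero] at h
  exact h

lemma erank_Wmat (x : ℝ) : erank (Wmat x) = erankProfile |x| := by
  have hs : 0 < √(x ^ 2 + 4) := by positivity
  have hsum : sigma1 (Wmat x) + sigma2 (Wmat x) = √(x ^ 2 + 4) := by
    rw [sigma1_Wmat, sigma2_Wmat]; ring
  rw [erank_eq_exp_binEntropy (hsum ▸ hs.ne'), hsum, sigma1_Wmat, erankProfile, sq_abs]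
  congr 2
  field_simp

/-- **Effective rank along the solution set.**  For every `x`, `1 < erank(W_x) ≤ 2`;
`erank(W_x) = 2` iff `x = 0`; `erank` is even in `x`; it strictly decreases in `|x|`;
and it tends to `1` as `|x| → ∞`. -/
theorem erank_along_solution_set :
    (∀ x : ℝ, 1 < erank (Wmat x) ∧ erank (Wmat x) ≤ 2) ∧
    (∀ x : ℝ, erank (Wmat x) = 2 ↔ x = 0) ∧
    (∀ x : ℝ, erank (Wmat (-x)) = erank (Wmat x)) ∧
    (∀ x y : ℝ, 0 ≤ x → x < y → erank (Wmat y) < erank (Wmat x)) ∧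
    Tendsto (fun x : ℝ => erank (Wmat x)) atTop (nhds 1) ∧
    Tendsto (fun x : ℝ => erank (Wmat x)) atBot (nhds 1) := by
  simp only [erank_Wmat]
  refine ⟨fun x => ⟨one_lt_erankProfile (abs_nonneg x), erankProfile_le_two _⟩,
    fun x => by rw [erankProfile_eq_two_iff, abs_eq_zero], fun x => by rw [abs_neg],
    fun x y hx hxy => ?_, tendsto_erankProfile_atTop.comp tendsto_abs_atTop_atTop,
    tendsto_erankProfile_atTop.comp tendsto_abs_atBot_atTop⟩
  rw [abs_of_nonneg hx, abs_of_nonneg (hx.trans hxy.le)]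
  exact strictAntiOn_erankProfile hx (hx.trans hxy.le) hxy
end

section
/- Let ℓ : ℝ^{d×d} → ℝ be a real-analytic loss, and consider gradient flow on a depth-L factorization (L ≥ 2) by square matrices W_l : [0,∞) → ℝ^{d×d} with balanced initialization. Then the determinant of the product matrix W_{L:1}(t) has the same sign as its initial value for all t ≥ 0: det(W_{L:1}(t)) is identically zero if det(W_{L:1}(0)) = 0, is positive for all t if det(W_{L:1}(0)) > 0, and is negative for all t if det(W_{L:1}(0)) < 0. -/
/-!
Balancedness `W_{l+1}ᵀ W_{l+1} = W_l W_lᵀ` is conserved by the gradient flow. Write the end-to-end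
matrix as `A = S_l W_l P_l` (suffix, factor, prefix). By Jacobi's formula, wherever `det A ≠ 0`,
`(det A)' = -det A · ∑_l tr (M_l ∇ℓ(A))` with `M_l = P_lᵀ W_l⁻¹ S_lᵀ`, and balancedness gives
`tr (M_l M_lᵀ) = tr ((W_lᵀ W_l)^(L-2))`: for `L ≥ 2` the inverse cancels. Hence
`|(det A)'| ≤ c(t) |det A|` with `c` continuous, so `(det A)² e^{±2Ct}` is monotone on compact time
intervals, `det A` can neither reach nor leave `0`, and by the intermediate value theorem it
keeps its sign.
-/

open Matrix

/-- The prefix product `W_{l−1}(t)⋯W_0(t)` of the first `l` factors (identity for `l = 0`). -/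
noncomputable def prodUpTo (d : ℕ) (W : ℕ → ℝ → Matrix (Fin d) (Fin d) ℝ) (l : ℕ)
    (t : ℝ) : Matrix (Fin d) (Fin d) ℝ :=
  (((List.range l).map fun i => W i t).reverse).prod

/-- The suffix product `W_{L−1}(t)⋯W_l(t)` of the last `L − l` factors (identity for `l = L`). -/
noncomputable def prodFrom (d L : ℕ) (W : ℕ → ℝ → Matrix (Fin d) (Fin d) ℝ) (l : ℕ)
    (t : ℝ) : Matrix (Fin d) (Fin d) ℝ :=
  (((List.range (L - l)).map fun i => W (l + i) t).reverse).prod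

open Set

section Products
variable {d : ℕ} (W : ℕ → ℝ → Matrix (Fin d) (Fin d) ℝ) (t : ℝ)

@[simp] theorem prodUpTo_zero : prodUpTo d W 0 t = 1 := rfl

theorem prodUpTo_succ (n : ℕ) : prodUpTo d W (n + 1) t = W n t * prodUpTo d W n t := by
  simp [prodUpTo, List.range_succ]

theorem prodFrom_of_le {L l : ℕ} (h : L ≤ l) : prodFrom d L W l t = 1 := by
  simp [prodFrom, Nat.sub_eq_zero_of_le h]

theorem prodFrom_succ {n l : ℕ} (h : l ≤ n) :
    prodFrom d (n + 1) W l t = W n t * prodFrom d n W l t := by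
  rw [prodFrom, prodFrom, show n + 1 - l = n - l + 1 by omega]
  simp [List.range_succ, show l + (n - l) = n by omega]

theorem prodFrom_eq_mul {L l : ℕ} (h : l < L) :
    prodFrom d L W l t = prodFrom d L W (l + 1) t * W l t := by
  rw [prodFrom, prodFrom, show L - l = L - (l + 1) + 1 by omega, List.range_succ_eq_map]
  simp [Function.comp_def, add_assoc, add_comm 1]

theorem prodUpTo_eq_prodFrom_mul {L l : ℕ} (h : l ≤ L) :
    prodUpTo d W L t = prodFrom d L W l t * prodUpTo d W l t := by
  induction l with
  | zero => simp [prodUpTo, prodFrom]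
  | succ l ih =>
    rw [ih (by omega), prodFrom_eq_mul W t (by omega), prodUpTo_succ, mul_assoc]

end Products

namespace Matrix

variable {𝕜 : Type*} [NontriviallyNormedField 𝕜] {m n p : Type*}

/-- Matrices carry no canonical norm, so curves of matrices are differentiated entrywise. -/
def HasDerivAtEntrywise (M : 𝕜 → Matrix m n 𝕜) (M' : Matrix m n 𝕜) (t : 𝕜) : Prop :=
  ∀ i j, HasDerivAt (fun s => M s i j) (M' i j) t

namespace HasDerivAtEntrywise

variable {M N : 𝕜 → Matrix m n 𝕜} {M' N' : Matrix m n 𝕜} {t : 𝕜}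

theorem const (B : Matrix m n 𝕜) (t : 𝕜) : HasDerivAtEntrywise (fun _ => B) 0 t :=
  fun i j => hasDerivAt_const t (B i j)

theorem sub (hM : HasDerivAtEntrywise M M' t) (hN : HasDerivAtEntrywise N N' t) :
    HasDerivAtEntrywise (fun s => M s - N s) (M' - N') t :=
  fun i j => (hM i j).sub (hN i j)

theorem transpose (hM : HasDerivAtEntrywise M M' t) :
    HasDerivAtEntrywise (fun s => (M s)ᵀ) M'ᵀ t :=
  fun i j => hM j i

theorem mul [Fintype n] {N : 𝕜 → Matrix n p 𝕜} {N' : Matrix n p 𝕜}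
    (hM : HasDerivAtEntrywise M M' t) (hN : HasDerivAtEntrywise N N' t) :
    HasDerivAtEntrywise (fun s => M s * N s) (M' * N t + M t * N') t := fun i j => by
  simpa [mul_apply, Finset.sum_add_distrib] using
    HasDerivAt.fun_sum fun k _ => (hM i k).mul (hN k j)

theorem continuousAt (hM : HasDerivAtEntrywise M M' t) : ContinuousAt M t :=
  continuousAt_pi.2 fun i => continuousAt_pi.2 fun j => (hM i j).continuousAt

theorem det [Fintype n] [DecidableEq n] {M : 𝕜 → Matrix n n 𝕜} {M' : Matrix n n 𝕜}
    (hM : HasDerivAtEntrywise M M' t) :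
    HasDerivAt (fun s => (M s).det) (trace (adjugate (M t) * M')) t := by
  have hcol : ∀ i, (updateCol (M t) i fun k => M' k i).det
      = ∑ σ : Equiv.Perm n, (Equiv.Perm.sign σ : 𝕜) *
          ((∏ j ∈ Finset.univ.erase i, M t (σ j) j) * M' (σ i) i) := fun i => by
    rw [det_apply']
    refine Finset.sum_congr rfl fun σ _ => ?_
    rw [← Finset.prod_erase_mul _ _ (Finset.mem_univ i), updateCol_self]
    congr 2
    exact Finset.prod_congr rfl fun j hj => updateCol_ne (Finset.ne_of_mem_erase hj)
  have htrace : trace (adjugate (M t) * M') = ∑ i, (updateCol (M t) i fun k => M' k i).det := by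
    simp only [trace, diag, mul_apply, ← cramer_apply, cramer_eq_adjugate_mulVec, mulVec,
      dotProduct]
  simp only [det_apply']
  rw [htrace, Finset.sum_congr rfl fun i _ => hcol i, Finset.sum_comm]
  refine HasDerivAt.fun_sum fun σ _ => ?_
  simpa [Finset.mul_sum] using
    (HasDerivAt.fun_finsetProd fun i _ => hM (σ i) i).const_mul (Equiv.Perm.sign σ : 𝕜)

end HasDerivAtEntrywise

theorem eq_of_hasDerivAtEntrywise_zero {M : ℝ → Matrix m n ℝ} {a b : ℝ} (hab : a ≤ b)
    (hM : ∀ s ∈ Icc a b, HasDerivAtEntrywise M 0 s) : M b = M a := by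
  ext i j
  exact constant_of_has_deriv_right_zero
    (fun s hs => (hM s hs i j).continuousAt.continuousWithinAt)
    (fun s hs => (hM s (Ico_subset_Icc_self hs) i j).hasDerivWithinAt) b ⟨hab, le_rfl⟩

variable [Fintype n] [DecidableEq n]

theorem transpose_mul_self_pow_mul_inv {K : Type*} [Field K] {A : Matrix n n K}
    (hA : IsUnit A.det) {a b c : ℕ} (habc : a + b = c + 1) :
    (Aᵀ * A) ^ b * A⁻¹ * (A * Aᵀ) ^ a * A⁻¹ᵀ = (Aᵀ * A) ^ c := by
  have hAT : IsUnit Aᵀ.det := by rwa [det_transpose]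
  have hsemi : A⁻¹ * (A * Aᵀ) ^ a = (Aᵀ * A) ^ a * A⁻¹ :=
    (SemiconjBy.pow_right (by
      simp only [SemiconjBy, ← Matrix.mul_assoc, nonsing_inv_mul _ hA, Matrix.one_mul]
      rw [Matrix.mul_assoc, mul_nonsing_inv _ hA, Matrix.mul_one]) a : SemiconjBy A⁻¹ _ _)
  calc (Aᵀ * A) ^ b * A⁻¹ * (A * Aᵀ) ^ a * A⁻¹ᵀ
      = (Aᵀ * A) ^ c * (Aᵀ * (A * A⁻¹) * A⁻¹ᵀ) := by
        rw [Matrix.mul_assoc _ A⁻¹, hsemi, ← Matrix.mul_assoc, ← pow_add, add_comm b, habc,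
          pow_succ]
        simp only [Matrix.mul_assoc]
    _ = (Aᵀ * A) ^ c := by
        rw [mul_nonsing_inv _ hA, Matrix.mul_one, transpose_nonsing_inv,
          mul_nonsing_inv _ hAT, Matrix.mul_one]

theorem adjugate_eq_det_smul_inv {K : Type*} [Field K] (A : Matrix n n K) (hA : A.det ≠ 0) :
    adjugate A = A.det • A⁻¹ := by
  rw [inv_def, smul_smul, Ring.inverse_eq_inv', mul_inv_cancel₀ hA, one_smul]

theorem trace_inv_mul_mul_neg_transpose_mul {K : Type*} [Field K] (S W P X : Matrix n n K)
    (hS : IsUnit S.det) (hP : IsUnit P.det) :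
    trace ((S * (W * P))⁻¹ * (S * -(Sᵀ * X * Pᵀ) * P)) = -trace (Pᵀ * W⁻¹ * Sᵀ * X) := by
  have hcycle : trace (Pᵀ * W⁻¹ * Sᵀ * X) = trace (P⁻¹ * (W⁻¹ * Sᵀ * X * Pᵀ) * P) := by
    rw [trace_conj' ((isUnit_iff_isUnit_det P).2 hP)]
    simp only [Matrix.mul_assoc]
    rw [trace_mul_comm Pᵀ]
    simp only [Matrix.mul_assoc]
  rw [hcycle, mul_inv_rev, mul_inv_rev]
  simp only [Matrix.mul_assoc, Matrix.mul_neg, Matrix.neg_mul, trace_neg,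
    nonsing_inv_mul_cancel_left _ _ hS]

theorem two_mul_abs_trace_mul_le (A B : Matrix n n ℝ) :
    2 * |trace (A * B)| ≤ trace (A * Aᵀ) + trace (Bᵀ * B) := by
  have hsq : ∀ X : Matrix n n ℝ, 0 ≤ trace (X * Xᵀ) := fun X => by
    simpa [conjTranspose_eq_transpose_of_trivial] using
      (posSemidef_self_mul_conjTranspose X).trace_nonneg
  have hBA : trace (Bᵀ * Aᵀ) = trace (A * B) := by
    rw [← transpose_mul, trace_transpose]
  have hplus := hsq (A + Bᵀ)
  have hminus := hsq (A - Bᵀ)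
  simp only [transpose_add, transpose_sub, transpose_transpose, add_mul, mul_add, sub_mul,
    mul_sub, trace_add, trace_sub, hBA] at hplus hminus
  rcases abs_cases (trace (A * B)) with ⟨h, _⟩ | ⟨h, _⟩ <;> linarith

end Matrix

theorem continuous_of_hasLineDerivAt {𝕜 E F : Type*} [NontriviallyNormedField 𝕜]
    [NormedAddCommGroup E] [NormedSpace 𝕜 E] [NormedAddCommGroup F] [NormedSpace 𝕜 F]
    {f : E → F} (hf : ContDiff 𝕜 1 f) {g : E → F} {v : E}
    (hg : ∀ x, HasLineDerivAt 𝕜 f (g x) x v) : Continuous g := by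
  have hfd : ∀ x, g x = fderiv 𝕜 f x v := fun x =>
    (hg x).unique (((hf.differentiable one_ne_zero) x).hasFDerivAt.hasLineDerivAt v)
  rw [show g = fun x => fderiv 𝕜 f x v from funext hfd]
  exact (hf.continuous_fderiv one_ne_zero).clm_apply continuous_const

theorem continuous_gradient_of_contDiff {d : ℕ} {ℓ : Matrix (Fin d) (Fin d) ℝ → ℝ}
    (hℓ : ContDiff ℝ 1 fun u : Fin d → Fin d → ℝ => ℓ (Matrix.of u))
    {G : Matrix (Fin d) (Fin d) ℝ → Matrix (Fin d) (Fin d) ℝ}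
    (hG : ∀ X H : Matrix (Fin d) (Fin d) ℝ,
      HasDerivAt (fun s : ℝ => ℓ (X + s • H)) (∑ i, ∑ j, G X i j * H i j) 0) :
    Continuous G := by
  refine continuous_pi fun i => continuous_pi fun j => ?_
  refine continuous_of_hasLineDerivAt hℓ (v := Matrix.single i j 1) fun X => ?_
  have h := hG X (Matrix.single i j 1)
  rwa [show ∑ a, ∑ b, G X a b * Matrix.single i j 1 a b = G X i j by
    simp [Matrix.single_apply, ite_and]] at h

theorem eq_zero_iff_of_abs_deriv_le_mul_abs {f f' : ℝ → ℝ} {a b C : ℝ} (hab : a ≤ b)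
    (hf : ContinuousOn f (Icc a b)) (hf' : ∀ x ∈ Ioo a b, HasDerivAt f (f' x) x)
    (hbound : ∀ x ∈ Ioo a b, f x ≠ 0 → |f' x| ≤ C * |f x|) : f a = 0 ↔ f b = 0 := by
  have hprod : ∀ x ∈ Ioo a b, |f x * f' x| ≤ C * f x ^ 2 := fun x hx => by
    by_cases h0 : f x = 0
    · simp [h0]
    rw [abs_mul, ← sq_abs (f x), sq]
    nlinarith [hbound x hx h0, abs_nonneg (f x)]
  -- `f² e^{±2Cx}` is monotone in opposite directions, so zeros propagate both ways.
  set g : ℝ → ℝ → ℝ := fun k x => f x ^ 2 * Real.exp (k * x) with hg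
  have hg' : ∀ k, ∀ x ∈ interior (Icc a b), HasDerivWithinAt (g k)
      (Real.exp (k * x) * (2 * (f x * f' x) + k * f x ^ 2)) (interior (Icc a b)) x := by
    intro k x hx
    rw [interior_Icc] at hx
    have hsq : HasDerivAt (fun x => f x ^ 2) (2 * f x * f' x) x := by
      simpa using (hf' x hx).fun_pow 2
    have hexp : HasDerivAt (fun x => Real.exp (k * x)) (Real.exp (k * x) * k) x := by
      simpa using ((hasDerivAt_id x).const_mul k).exp
    exact ((hsq.mul hexp).congr_deriv (by ring)).hasDerivWithinAt
  have hgc : ∀ k, ContinuousOn (g k) (Icc a b) := fun k => (hf.pow 2).mul (by fun_prop)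
  have hmono : g (2 * C) a ≤ g (2 * C) b := by
    refine monotoneOn_of_hasDerivWithinAt_nonneg (convex_Icc a b) (hgc _) (hg' _) (fun x hx => ?_)
      (left_mem_Icc.2 hab) (right_mem_Icc.2 hab) hab
    rw [interior_Icc] at hx
    have := (abs_le.1 (hprod x hx)).1
    exact mul_nonneg (Real.exp_pos _).le (by linarith)
  have hanti : g (-(2 * C)) b ≤ g (-(2 * C)) a := by
    refine antitoneOn_of_hasDerivWithinAt_nonpos (convex_Icc a b) (hgc _) (hg' _) (fun x hx => ?_)
      (left_mem_Icc.2 hab) (right_mem_Icc.2 hab) hab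
    rw [interior_Icc] at hx
    have := (abs_le.1 (hprod x hx)).2
    exact mul_nonpos_of_nonneg_of_nonpos (Real.exp_pos _).le (by linarith)
  have hg0 : ∀ k x, g k x ≤ 0 → f x = 0 := fun k x hx =>
    pow_eq_zero_iff two_ne_zero |>.1 <| le_antisymm
      (nonpos_of_mul_nonpos_left hx (Real.exp_pos _)) (sq_nonneg _)
  constructor
  · intro ha
    exact hg0 (-(2 * C)) b (by simpa only [hg, ha, zero_pow two_ne_zero, zero_mul] using hanti)
  · intro hb
    exact hg0 (2 * C) a (by simpa only [hg, hb, zero_pow two_ne_zero, zero_mul] using hmono)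

theorem sign_eq_of_abs_deriv_le_mul_abs {f f' c : ℝ → ℝ} {a b : ℝ} (hab : a ≤ b)
    (hf' : ∀ x ∈ Icc a b, HasDerivAt f (f' x) x) (hc : ContinuousOn c (Icc a b))
    (hbound : ∀ x ∈ Icc a b, f x ≠ 0 → |f' x| ≤ c x * |f x|) :
    SignType.sign (f b) = SignType.sign (f a) := by
  obtain ⟨C, hC⟩ := isCompact_Icc.bddAbove_image hc
  have hf : ContinuousOn f (Icc a b) := fun x hx => (hf' x hx).continuousAt.continuousWithinAt
  have hzero : ∀ x ∈ Icc a b, f a = 0 ↔ f x = 0 := fun x hx =>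
    eq_zero_iff_of_abs_deriv_le_mul_abs hx.1 (hf.mono (Icc_subset_Icc_right hx.2))
      (fun y hy => hf' y ⟨hy.1.le, hy.2.le.trans hx.2⟩)
      (fun y hy h0 => (hbound y ⟨hy.1.le, hy.2.le.trans hx.2⟩ h0).trans <|
        mul_le_mul_of_nonneg_right (hC ⟨y, ⟨hy.1.le, hy.2.le.trans hx.2⟩, rfl⟩) (abs_nonneg _))
  by_cases ha : f a = 0
  · rw [ha, (hzero b ⟨hab, le_rfl⟩).1 ha]
  have hb : f b ≠ 0 := fun h => ha ((hzero b ⟨hab, le_rfl⟩).2 h)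
  by_contra hsign
  have h0 : (0 : ℝ) ∈ uIcc (f a) (f b) := by
    rcases lt_or_gt_of_ne ha with ha' | ha' <;> rcases lt_or_gt_of_ne hb with hb' | hb'
    · simp [sign_neg ha', sign_neg hb'] at hsign
    · exact mem_uIcc.2 (Or.inl ⟨ha'.le, hb'.le⟩)
    · exact mem_uIcc.2 (Or.inr ⟨hb'.le, ha'.le⟩)
    · simp [sign_pos ha', sign_pos hb'] at hsign
  obtain ⟨x, hx, hfx⟩ := intermediate_value_uIcc (by rwa [uIcc_of_le hab]) h0
  rw [uIcc_of_le hab] at hx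
  exact ha ((hzero x hx).2 hfx)

def IsBalancedAt (d L : ℕ) (W : ℕ → ℝ → Matrix (Fin d) (Fin d) ℝ) (t : ℝ) : Prop :=
  ∀ l, l + 1 < L → (W (l + 1) t)ᵀ * W (l + 1) t = W l t * (W l t)ᵀ

namespace IsBalancedAt
variable {d L : ℕ} {W : ℕ → ℝ → Matrix (Fin d) (Fin d) ℝ} {t : ℝ}

theorem prodUpTo_mul_transpose (hb : IsBalancedAt d L W t) {l : ℕ} (hl : l < L) :
    prodUpTo d W l t * (prodUpTo d W l t)ᵀ = ((W l t)ᵀ * W l t) ^ l := by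
  induction l with
  | zero => simp
  | succ l ih =>
    rw [prodUpTo_succ, transpose_mul, hb l hl, Matrix.mul_assoc,
      ← Matrix.mul_assoc _ _ (W l t)ᵀ, ih (by omega), ← Matrix.mul_assoc, ← mul_pow_mul,
      Matrix.mul_assoc, ← pow_succ]

theorem transpose_prodFrom_mul (hb : IsBalancedAt d L W t) {l : ℕ} (hl : l < L) :
    (prodFrom d L W (l + 1) t)ᵀ * prodFrom d L W (l + 1) t
      = (W l t * (W l t)ᵀ) ^ (L - 1 - l) := by
  induction hk : L - 1 - l generalizing l with
  | zero => simp [prodFrom_of_le W t (show L ≤ l + 1 by omega)]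
  | succ k ih =>
    have hl1 : l + 1 < L := by omega
    rw [prodFrom_eq_mul W t hl1, transpose_mul, Matrix.mul_assoc,
      ← Matrix.mul_assoc _ _ (W (l + 1) t), ih hl1 (by omega), ← Matrix.mul_assoc,
      ← mul_pow_mul, Matrix.mul_assoc, hb l hl1, ← pow_succ]

end IsBalancedAt

noncomputable def flowVelocity (d L : ℕ)
    (G : Matrix (Fin d) (Fin d) ℝ → Matrix (Fin d) (Fin d) ℝ)
    (W : ℕ → ℝ → Matrix (Fin d) (Fin d) ℝ) (l : ℕ) (t : ℝ) : Matrix (Fin d) (Fin d) ℝ :=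
  -((prodFrom d L W (l + 1) t)ᵀ * G (prodUpTo d W L t) * (prodUpTo d W l t)ᵀ)

noncomputable def logDetRateBound (d L : ℕ)
    (G : Matrix (Fin d) (Fin d) ℝ → Matrix (Fin d) (Fin d) ℝ)
    (W : ℕ → ℝ → Matrix (Fin d) (Fin d) ℝ) (t : ℝ) : ℝ :=
  ∑ l ∈ Finset.range L, (trace (((W l t)ᵀ * W l t) ^ (L - 2)) +
    trace ((G (prodUpTo d W L t))ᵀ * G (prodUpTo d W L t))) / 2

section GradientFlow

variable {d L : ℕ} {G : Matrix (Fin d) (Fin d) ℝ → Matrix (Fin d) (Fin d) ℝ}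
  {W : ℕ → ℝ → Matrix (Fin d) (Fin d) ℝ}

theorem hasDerivAtEntrywise_prodUpTo {V : ℕ → Matrix (Fin d) (Fin d) ℝ} {t : ℝ} {n : ℕ}
    (hW : ∀ l < n, HasDerivAtEntrywise (W l) (V l) t) :
    HasDerivAtEntrywise (prodUpTo d W n)
      (∑ l ∈ Finset.range n, prodFrom d n W (l + 1) t * V l * prodUpTo d W l t) t := by
  induction n with
  | zero =>
    rw [Finset.sum_range_zero]
    exact HasDerivAtEntrywise.const 1 t
  | succ n ih =>
    have h := (hW n n.lt_succ_self).mul (ih fun l hl => hW l (by omega))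
    rw [show prodUpTo d W (n + 1) = fun s => W n s * prodUpTo d W n s from
      funext fun s => prodUpTo_succ W s n]
    convert h using 1
    rw [Finset.sum_range_succ, prodFrom_of_le W t le_rfl, Matrix.one_mul, add_comm,
      Finset.mul_sum]
    congr 1
    refine Finset.sum_congr rfl fun l hl => ?_
    rw [prodFrom_succ W t (Finset.mem_range.1 hl), Matrix.mul_assoc, Matrix.mul_assoc,
      Matrix.mul_assoc]

theorem IsBalancedAt.of_gradientFlow
    (hflow : ∀ l < L, ∀ t, 0 ≤ t → HasDerivAtEntrywise (W l) (flowVelocity d L G W l t) t)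
    (h0 : IsBalancedAt d L W 0) {t : ℝ} (ht : 0 ≤ t) : IsBalancedAt d L W t := by
  intro l hl
  have hvel : ∀ s, (W (l + 1) s)ᵀ * flowVelocity d L G W (l + 1) s
      = flowVelocity d L G W l s * (W l s)ᵀ := fun s => by
    simp only [flowVelocity, prodFrom_eq_mul W s hl, prodUpTo_succ, transpose_mul,
      Matrix.mul_neg, Matrix.neg_mul, Matrix.mul_assoc]
  have hconst := eq_of_hasDerivAtEntrywise_zero ht fun s hs => by
    have hWl := hflow l (by omega) s hs.1
    have hWl1 := hflow (l + 1) hl s hs.1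
    have hvelT : (flowVelocity d L G W (l + 1) s)ᵀ * W (l + 1) s
        = W l s * (flowVelocity d L G W l s)ᵀ := by
      simpa only [transpose_mul, transpose_transpose] using congrArg transpose (hvel s)
    convert (hWl1.transpose.mul hWl1).sub (hWl.mul hWl.transpose) using 1
    rw [hvel, hvelT, add_comm, sub_self]
  rw [← sub_eq_zero, hconst, h0 l hl, sub_self]

theorem IsBalancedAt.abs_trace_inv_mul_le (hL : 2 ≤ L) {t : ℝ} (hb : IsBalancedAt d L W t)
    (hA : (prodUpTo d W L t).det ≠ 0) (X : Matrix (Fin d) (Fin d) ℝ) {l : ℕ} (hl : l < L) :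
    |trace ((prodUpTo d W L t)⁻¹ * (prodFrom d L W (l + 1) t *
        -((prodFrom d L W (l + 1) t)ᵀ * X * (prodUpTo d W l t)ᵀ) * prodUpTo d W l t))|
      ≤ (trace (((W l t)ᵀ * W l t) ^ (L - 2)) + trace (Xᵀ * X)) / 2 := by
  set S := prodFrom d L W (l + 1) t
  set P := prodUpTo d W l t
  have hsplit : prodUpTo d W L t = S * (W l t * P) := by
    rw [prodUpTo_eq_prodFrom_mul W t hl, prodUpTo_succ]
  rw [hsplit, det_mul, det_mul, mul_ne_zero_iff, mul_ne_zero_iff] at hA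
  obtain ⟨hS, hW, hP⟩ := hA
  have hMM : trace ((Pᵀ * (W l t)⁻¹ * Sᵀ) * (Pᵀ * (W l t)⁻¹ * Sᵀ)ᵀ)
      = trace (((W l t)ᵀ * W l t) ^ (L - 2)) := by
    rw [← transpose_mul_self_pow_mul_inv hW.isUnit (show L - 1 - l + l = L - 2 + 1 by omega),
      ← hb.prodUpTo_mul_transpose hl, ← hb.transpose_prodFrom_mul hl]
    simp only [transpose_mul, transpose_transpose, ← Matrix.mul_assoc]
    conv_lhs => rw [trace_mul_comm]
    simp only [Matrix.mul_assoc]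
    rfl
  rw [hsplit, trace_inv_mul_mul_neg_transpose_mul _ _ _ _ hS.isUnit hP.isUnit, abs_neg]
  linarith [two_mul_abs_trace_mul_le (Pᵀ * (W l t)⁻¹ * Sᵀ) X]

theorem IsBalancedAt.abs_trace_adjugate_mul_le (hL : 2 ≤ L) {t : ℝ} (hb : IsBalancedAt d L W t)
    (hA : (prodUpTo d W L t).det ≠ 0) :
    |trace (adjugate (prodUpTo d W L t) * ∑ l ∈ Finset.range L,
        prodFrom d L W (l + 1) t * flowVelocity d L G W l t * prodUpTo d W l t)|
      ≤ logDetRateBound d L G W t * |(prodUpTo d W L t).det| := by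
  rw [adjugate_eq_det_smul_inv _ hA, smul_mul, trace_smul, smul_eq_mul, abs_mul, mul_comm,
    Matrix.mul_sum, trace_sum]
  gcongr
  exact (Finset.abs_sum_le_sum_abs _ _).trans <| Finset.sum_le_sum fun l hl =>
    hb.abs_trace_inv_mul_le hL hA _ (Finset.mem_range.1 hl)

theorem continuousOn_logDetRateBound (hG : Continuous G)
    (hflow : ∀ l < L, ∀ t, 0 ≤ t → HasDerivAtEntrywise (W l) (flowVelocity d L G W l t) t) :
    ContinuousOn (logDetRateBound d L G W) (Ici 0) := by
  have hA : ContinuousOn (prodUpTo d W L) (Ici 0) := fun t ht =>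
    (hasDerivAtEntrywise_prodUpTo fun l hl => hflow l hl t ht).continuousAt.continuousWithinAt
  refine continuousOn_finsetSum _ fun l hl => ?_
  have hW : ContinuousOn (W l) (Ici 0) := fun t ht =>
    (hflow l (Finset.mem_range.1 hl) t ht).continuousAt.continuousWithinAt
  fun_prop

end GradientFlow

/-- **The determinant of the product matrix does not change sign.**
Let `ℓ` be a real-analytic loss on `d×d` matrices with gradient `G` (w.r.t. the Frobenius
inner product), and run gradient flow on a depth-`L` factorization (`L ≥ 2`) by square
matrices with balanced initialization.  Then `det(W_{L:1}(t))` is identically zero if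
`det(W_{L:1}(0)) = 0`, positive for all `t ≥ 0` if `det(W_{L:1}(0)) > 0`, and negative
for all `t ≥ 0` if `det(W_{L:1}(0)) < 0`. -/
theorem det_sign_constant_deep_factorization
    (d L : ℕ) (hL : 2 ≤ L)
    (ℓ : Matrix (Fin d) (Fin d) ℝ → ℝ)
    (hanalytic : ∀ v : Fin d → Fin d → ℝ,
      AnalyticAt ℝ (fun u : Fin d → Fin d → ℝ => ℓ (Matrix.of u)) v)
    (G : Matrix (Fin d) (Fin d) ℝ → Matrix (Fin d) (Fin d) ℝ)
    (hG : ∀ X H : Matrix (Fin d) (Fin d) ℝ,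
      HasDerivAt (fun s : ℝ => ℓ (X + s • H)) (∑ i, ∑ j, G X i j * H i j) 0)
    (W : ℕ → ℝ → Matrix (Fin d) (Fin d) ℝ)
    (hGF : ∀ l, l < L → ∀ t : ℝ, 0 ≤ t → ∀ i j,
      HasDerivAt (fun s => W l s i j)
        ((-((prodFrom d L W (l + 1) t)ᵀ * G (prodUpTo d W L t) *
            (prodUpTo d W l t)ᵀ)) i j) t)
    (hbal : ∀ l, l + 1 < L → (W (l + 1) 0)ᵀ * W (l + 1) 0 = W l 0 * (W l 0)ᵀ) :
    ((prodUpTo d W L 0).det = 0 → ∀ t : ℝ, 0 ≤ t → (prodUpTo d W L t).det = 0) ∧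
    (0 < (prodUpTo d W L 0).det → ∀ t : ℝ, 0 ≤ t → 0 < (prodUpTo d W L t).det) ∧
    ((prodUpTo d W L 0).det < 0 → ∀ t : ℝ, 0 ≤ t → (prodUpTo d W L t).det < 0) := by
  have hG' : Continuous G := continuous_gradient_of_contDiff
    (AnalyticOnNhd.contDiff fun v _ => hanalytic v) hG
  have hsign : ∀ t, 0 ≤ t →
      SignType.sign (prodUpTo d W L t).det = SignType.sign (prodUpTo d W L 0).det :=
    fun t ht => sign_eq_of_abs_deriv_le_mul_abs ht
      (fun s hs => (hasDerivAtEntrywise_prodUpTo fun l hl => hGF l hl s hs.1).det)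
      ((continuousOn_logDetRateBound hG' hGF).mono Icc_subset_Ici_self)
      fun s hs h0 => (IsBalancedAt.of_gradientFlow hGF hbal hs.1).abs_trace_adjugate_mul_le hL h0
  refine ⟨fun h0 t ht => ?_, fun h0 t ht => ?_, fun h0 t ht => ?_⟩
  · rw [← sign_eq_zero_iff, hsign t ht, sign_eq_zero_iff, h0]
  · rw [← sign_eq_one_iff, hsign t ht, sign_eq_one_iff]
    exact h0
  · rw [← sign_eq_neg_one_iff, hsign t ht, sign_eq_neg_one_iff]
    exact h0
end

section
/- Let h : [0,1] → ℝ be the binary entropy function h(p) = −p·ln(p) − (1−p)·ln(1−p), with the convention 0·ln 0 = 0. Then for all p ∈ [0,1], h(p) ≤ 2·√(p·(1−p)); in particular h(p) ≤ 2·√p. -/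
/-!
Both terms of the entropy, `-x log x` at `x = p` and at `x = 1 - p`, are at most `√(x (1 - x))`.
Writing `x = t²`, the sharper bound `-x log x ≤ (1 - x) √x` is `sinh u ≤ u` for `u = log t ≤ 0`,
because `sinh (log t) = (t - t⁻¹) / 2`; then `(1 - x) √x = √(x (1 - x)) √(1 - x)` and `√(1 - x) ≤ 1`.
-/

open Real

lemma sub_inv_div_two_le_log {t : ℝ} (ht0 : 0 < t) (ht1 : t ≤ 1) : (t - t⁻¹) / 2 ≤ log t := by
  rw [← sinh_log ht0]
  exact sinh_le_self_iff.2 (log_nonpos ht0.le ht1)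

lemma neg_mul_log_le_one_sub_mul_sqrt {x : ℝ} (hx0 : 0 ≤ x) (hx1 : x ≤ 1) :
    -(x * log x) ≤ (1 - x) * √x := by
  rcases hx0.eq_or_lt with rfl | hx
  · simp
  obtain ⟨t, ht0, rfl⟩ : ∃ t, 0 < t ∧ t ^ 2 = x := ⟨√x, sqrt_pos.2 hx, sq_sqrt hx0⟩
  have ht1 : t ≤ 1 := by nlinarith
  have hlog := sub_inv_div_two_le_log ht0 ht1
  have hinv : t ^ 2 * t⁻¹ = t := by field_simp
  rw [sqrt_sq ht0.le, log_pow, Nat.cast_ofNat]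
  nlinarith

lemma neg_mul_log_le_sqrt_mul_one_sub {x : ℝ} (hx0 : 0 ≤ x) (hx1 : x ≤ 1) :
    -(x * log x) ≤ √(x * (1 - x)) :=
  calc -(x * log x) ≤ (1 - x) * √x := neg_mul_log_le_one_sub_mul_sqrt hx0 hx1
    _ = √(x * (1 - x)) * √(1 - x) := by
      rw [sqrt_mul hx0, mul_assoc, mul_self_sqrt (sub_nonneg.2 hx1), mul_comm]
    _ ≤ √(x * (1 - x)) :=
      mul_le_of_le_one_right (sqrt_nonneg _) (sqrt_le_one.2 (sub_le_self _ hx0))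

/-- **Binary entropy bound.**  For the binary entropy function
`h(p) = −p·ln p − (1−p)·ln(1−p)` (with the convention `0·ln 0 = 0`, which holds
automatically since `Real.log 0 = 0`), one has `h(p) ≤ 2√(p(1−p)) ≤ 2√p` on `[0,1]`. -/
theorem binary_entropy_le_two_sqrt :
    ∀ p ∈ Set.Icc (0 : ℝ) 1,
      (-(p * Real.log p) - (1 - p) * Real.log (1 - p) ≤ 2 * Real.sqrt (p * (1 - p))) ∧
      (-(p * Real.log p) - (1 - p) * Real.log (1 - p) ≤ 2 * Real.sqrt p) := by
  rintro p ⟨hp0, hp1⟩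
  have hfirst := neg_mul_log_le_sqrt_mul_one_sub hp0 hp1
  have hsecond := neg_mul_log_le_sqrt_mul_one_sub (sub_nonneg.2 hp1) (sub_le_self 1 hp0)
  rw [sub_sub_cancel, mul_comm (1 - p) p] at hsecond
  have hentropy : -(p * log p) - (1 - p) * log (1 - p) ≤ 2 * √(p * (1 - p)) := by linarith
  refine ⟨hentropy, hentropy.trans ?_⟩
  gcongr
  exact mul_le_of_le_one_right hp0 (sub_le_self 1 hp0)
end
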